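/- Let 𝓑 ⊆ ℝⁿ, let f : 𝓑 → ℝⁿ and A : 𝓑 → ℝ^{m×m} be continuous, and let B ∈ ℝ. Suppose V : ℝⁿ × ℝ^m → ℝ is continuously differentiable and satisfies V(x,w) ≥ |w|² and f(x)·D_xV(x,w) + ((A(x) − B·I)w)·D_wV(x,w) ≤ 0 for all (x,w) ∈ 𝓑 × ℝ^m. Then for every differentiable solution x : [0,∞) → 𝓑 of x′(t) = f(x(t)) and every differentiable y : [0,∞) → ℝ^m with y′(t) = A(x(t))y(t) and y(0) ≠ 0, one has limsup_{t→∞} (1/t) log|y(t)| ≤ B. -/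

import Mathlib

/-!
The rescaled solution `w t = exp (-B t) • y t` solves the shifted equation `w' = (A (x t) - B) w`,
so the Lyapunov inequality makes `t ↦ V (x t, w t)` nonincreasing and `‖w t‖² ≤ V (x 0, y 0)`.
Hence `log ‖y t‖ ≤ B t + const`, which bounds the limsup by `B` once we know that `y` never
vanishes; this is backward uniqueness for the linear equation `y' = A (x t) y`, whose coefficients
are continuous, hence bounded on compact time intervals.
-/

open Filter Set Bornology

noncomputable def mulVecE {m : ℕ} (A : Matrix (Fin m) (Fin m) ℝ) (v : EuclideanSpace ℝ (Fin m)) :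
    EuclideanSpace ℝ (Fin m) :=
  Matrix.toEuclideanCLM (𝕜 := ℝ) A v

section LinearODE

variable {E : Type*} [NormedAddCommGroup E] [NormedSpace ℝ E]

theorem linearODE_solution_ne_zero {L : ℝ → E →L[ℝ] E} {y : ℝ → E} {a s : ℝ}
    (hL : ContinuousOn L (Ici a))
    (hy : ∀ t ∈ Ici a, HasDerivWithinAt y (L t (y t)) (Ici a) t)
    (hya : y a ≠ 0) (hs : a ≤ s) : y s ≠ 0 := by
  intro hys
  obtain ⟨K, hK⟩ : ∃ K, ∀ t ∈ Icc a s, ‖L t‖ ≤ K :=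
    isCompact_Icc.exists_bound_of_continuousOn (hL.mono Icc_subset_Ici_self)
  have hLip : ∀ t ∈ Ioc a s, LipschitzOnWith K.toNNReal (L t) univ := fun t ht =>
    have hKt : ‖L t‖ ≤ K := hK t (Ioc_subset_Icc_self ht)
    ((L t).lipschitz.weaken
      ((Real.le_toNNReal_iff_coe_le ((norm_nonneg _).trans hKt)).mpr hKt)).lipschitzOnWith
  have hyc : ContinuousOn y (Icc a s) := fun t ht =>
    ((hy t ht.1).continuousWithinAt).mono Icc_subset_Ici_self
  have hy' : ∀ t ∈ Ioc a s, HasDerivWithinAt y (L t (y t)) (Iic t) t := fun t ht =>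
    ((hy t (mem_Ici.mpr ht.1.le)).hasDerivAt (Ici_mem_nhds ht.1)).hasDerivWithinAt
  have hzero := ODE_solution_unique_of_mem_Icc_left hLip hyc hy' (fun _ _ => mem_univ _)
    continuousOn_const (fun t _ => by simpa using hasDerivWithinAt_const t (Iic t) (0 : E))
    (fun _ _ => mem_univ _) hys
  exact hya (hzero ⟨le_rfl, hs⟩)

theorem HasDerivWithinAt.exp_neg_mul_smul {L : E →L[ℝ] E} {y : ℝ → E} {s : Set ℝ} {t : ℝ}
    (hy : HasDerivWithinAt y (L (y t)) s t) (B : ℝ) :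
    HasDerivWithinAt (fun t => Real.exp (-B * t) • y t)
      (L (Real.exp (-B * t) • y t) - B • Real.exp (-B * t) • y t) s t := by
  have hexp : HasDerivWithinAt (fun t => Real.exp (-B * t)) (Real.exp (-B * t) * -B) s t :=
    ((hasDerivAt_id t).const_mul (-B)).exp.hasDerivWithinAt.congr_deriv (by simp)
  refine (hexp.smul hy).congr_deriv ?_
  rw [map_smul, mul_smul, smul_comm _ (-B), neg_smul, sub_eq_add_neg, add_comm]

end LinearODE

theorem antitoneOn_comp_of_fderiv_nonpos {F : Type*} [NormedAddCommGroup F] [NormedSpace ℝ F]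
    {V : F → ℝ} (hV : Differentiable ℝ V) {γ γ' : ℝ → F} {a : ℝ}
    (hγ : ∀ t ∈ Ici a, HasDerivWithinAt γ (γ' t) (Ici a) t)
    (hV' : ∀ t ∈ Ioi a, fderiv ℝ V (γ t) (γ' t) ≤ 0) :
    AntitoneOn (V ∘ γ) (Ici a) := by
  have hVγ : ∀ t ∈ Ici a, HasDerivWithinAt (V ∘ γ) (fderiv ℝ V (γ t) (γ' t)) (Ici a) t :=
    fun t ht => (hV (γ t)).hasFDerivAt.comp_hasDerivWithinAt t (hγ t ht)
  refine antitoneOn_of_hasDerivWithinAt_nonpos (convex_Ici a)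
    (fun t ht => (hVγ t ht).continuousWithinAt) (fun t ht => ?_) (by simpa using hV')
  rw [interior_Ici] at ht ⊢
  exact ((hVγ t (mem_Ici.mpr (le_of_lt ht))).hasDerivAt (Ici_mem_nhds ht)).hasDerivWithinAt

theorem limsup_one_div_mul_le_of_le_add_mul {g : ℝ → ℝ} {D B : ℝ}
    (hg : ∀ᶠ t in atTop, g t ≤ D + B * t) :
    limsup (fun t => ((1 / t * g t : ℝ) : EReal)) atTop ≤ (B : EReal) := by
  have hlim : Tendsto (fun t : ℝ => ((D * t⁻¹ + B : ℝ) : EReal)) atTop (nhds (B : EReal)) :=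
    EReal.tendsto_coe.mpr (by simpa using (tendsto_inv_atTop_zero.const_mul D).add_const B)
  rw [← hlim.limsup_eq]
  refine limsup_le_limsup ?_
  filter_upwards [hg, eventually_gt_atTop 0] with t hgt ht
  rw [EReal.coe_le_coe_iff]
  calc 1 / t * g t ≤ 1 / t * (D + B * t) := by gcongr
    _ = D * t⁻¹ + B := by field_simp

theorem Matrix.continuous_toEuclideanCLM {𝕜 ι : Type*} [RCLike 𝕜] [Fintype ι] [DecidableEq ι] :
    Continuous (Matrix.toEuclideanCLM (n := ι) (𝕜 := 𝕜)) :=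
  LinearMap.continuous_of_finiteDimensional
    (Matrix.toEuclideanCLM (n := ι) (𝕜 := 𝕜)).toAlgEquiv.toLinearMap

theorem stmt_9_general {n m : ℕ} (𝓑 : Set (EuclideanSpace ℝ (Fin n)))
    (f : EuclideanSpace ℝ (Fin n) → EuclideanSpace ℝ (Fin n))
    (A : EuclideanSpace ℝ (Fin n) → Matrix (Fin m) (Fin m) ℝ)
    (hA : ContinuousOn A 𝓑)
    (B : ℝ)
    (V : EuclideanSpace ℝ (Fin n) × EuclideanSpace ℝ (Fin m) → ℝ) (hV : ContDiff ℝ 1 V)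
    (hVlb : ∀ x ∈ 𝓑, ∀ w : EuclideanSpace ℝ (Fin m), ‖w‖ ^ 2 ≤ V (x, w))
    (hVlie : ∀ x ∈ 𝓑, ∀ w : EuclideanSpace ℝ (Fin m),
      fderiv ℝ V (x, w) (f x, mulVecE (A x) w - B • w) ≤ 0)
    (x : ℝ → EuclideanSpace ℝ (Fin n))
    (hxmem : ∀ t ∈ Ici (0 : ℝ), x t ∈ 𝓑)
    (hxode : ∀ t ∈ Ici (0 : ℝ), HasDerivWithinAt x (f (x t)) (Ici 0) t)
    (y : ℝ → EuclideanSpace ℝ (Fin m)) (hy0 : y 0 ≠ 0)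
    (hyode : ∀ t ∈ Ici (0 : ℝ), HasDerivWithinAt y (mulVecE (A (x t)) (y t)) (Ici 0) t) :
    limsup (fun t => ((1 / t * Real.log ‖y t‖ : ℝ) : EReal)) atTop ≤ (B : EReal) := by
  have hAx : ContinuousOn (fun t => Matrix.toEuclideanCLM (𝕜 := ℝ) (A (x t))) (Ici 0) :=
    Matrix.continuous_toEuclideanCLM.comp_continuousOn
      (hA.comp (fun t ht => (hxode t ht).continuousWithinAt) hxmem)
  set w := fun t => Real.exp (-B * t) • y t
  have hw_ne : ∀ t ∈ Ici (0 : ℝ), w t ≠ 0 := fun t ht =>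
    smul_ne_zero (Real.exp_pos _).ne' (linearODE_solution_ne_zero hAx hyode hy0 ht)
  have hV_anti : AntitoneOn (V ∘ fun t => (x t, w t)) (Ici 0) :=
    antitoneOn_comp_of_fderiv_nonpos (hV.differentiable one_ne_zero)
      (fun t ht => (hxode t ht).prodMk ((hyode t ht).exp_neg_mul_smul B))
      (fun t ht => hVlie _ (hxmem t (mem_Ici.mpr (le_of_lt ht))) _)
  have hw_sq : ∀ t ∈ Ici (0 : ℝ), ‖w t‖ ^ 2 ≤ V (x 0, y 0) := fun t ht =>
    calc ‖w t‖ ^ 2 ≤ V (x t, w t) := hVlb _ (hxmem t ht) _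
      _ ≤ V (x 0, w 0) := hV_anti self_mem_Ici ht ht
      _ = V (x 0, y 0) := by simp [w]
  refine limsup_one_div_mul_le_of_le_add_mul (D := Real.log (V (x 0, y 0)) / 2) ?_
  filter_upwards [eventually_ge_atTop 0] with t ht
  have hwt : 0 < ‖w t‖ := norm_pos_iff.mpr (hw_ne t ht)
  have hy_eq : ‖y t‖ = Real.exp (B * t) * ‖w t‖ := by
    rw [norm_smul, Real.norm_of_nonneg (Real.exp_pos _).le, ← mul_assoc, ← Real.exp_add]
    simp
  have hlog_w : 2 * Real.log ‖w t‖ ≤ Real.log (V (x 0, y 0)) := by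
    simpa [Real.log_pow] using Real.log_le_log (by positivity) (hw_sq t ht)
  rw [hy_eq, Real.log_mul (Real.exp_pos _).ne' hwt.ne', Real.log_exp]
  linarith

/-- per-trajectory content of Proposition 2.6(1), the shifted spectrum
bound: if `V` is `C¹` with `V(x,w) ≥ |w|²` and
`f(x)·D_xV(x,w) + ((A(x) − B·I)w)·D_wV(x,w) ≤ 0` on `𝓑 × ℝ^m`, then along every trajectory
of `x' = f(x)` in `𝓑`, every nonzero solution of the tangent dynamics `y' = A(x(t))y`
satisfies `limsup (1/t) log|y(t)| ≤ B`. -/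
theorem stmt_9 {n m : ℕ} (𝓑 : Set (EuclideanSpace ℝ (Fin n)))
    (f : EuclideanSpace ℝ (Fin n) → EuclideanSpace ℝ (Fin n))
    (A : EuclideanSpace ℝ (Fin n) → Matrix (Fin m) (Fin m) ℝ)
    (hf : ContinuousOn f 𝓑) (hA : ContinuousOn A 𝓑)
    (B : ℝ)
    (V : EuclideanSpace ℝ (Fin n) × EuclideanSpace ℝ (Fin m) → ℝ) (hV : ContDiff ℝ 1 V)
    (hVlb : ∀ x ∈ 𝓑, ∀ w : EuclideanSpace ℝ (Fin m), ‖w‖ ^ 2 ≤ V (x, w))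
    (hVlie : ∀ x ∈ 𝓑, ∀ w : EuclideanSpace ℝ (Fin m),
      fderiv ℝ V (x, w) (f x, mulVecE (A x) w - B • w) ≤ 0)
    (x : ℝ → EuclideanSpace ℝ (Fin n))
    (hxmem : ∀ t ∈ Ici (0 : ℝ), x t ∈ 𝓑)
    (hxode : ∀ t ∈ Ici (0 : ℝ), HasDerivWithinAt x (f (x t)) (Ici 0) t)
    (y : ℝ → EuclideanSpace ℝ (Fin m)) (hy0 : y 0 ≠ 0)
    (hyode : ∀ t ∈ Ici (0 : ℝ), HasDerivWithinAt y (mulVecE (A (x t)) (y t)) (Ici 0) t) :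
    limsup (fun t => ((1 / t * Real.log ‖y t‖ : ℝ) : EReal)) atTop ≤ (B : EReal) :=
  stmt_9_general 𝓑 f A hA B V hV hVlb hVlie x hxmem hxode y hy0 hyode
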